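/- Assume b_EI > 0 and b_II > 0. Define, for N_E ≥ 0, I(N_E) = ∫₀^∞ e^{−s²/2}·e^{−(b_EI·N_E − b_II·N_I(N_E) + (b_EI − b_EE)·ν_ext)·s/√a_I}·(e^{s·V_F/√a_I} − e^{s·V_R/√a_I}) ds. Then lim_{N_E→∞} N_I(N_E)²·I(N_E) = √a_I/(V_F − V_R). -/

import Mathlib

open MeasureTheory Real Set Filter Nat


/-- The stationary firing-rate functional `I2` of the inhibitory population. -/
noncomputable def I2 (VR VF aI bEE bEI bII νext : ℝ) (NE NI : ℝ) : ℝ :=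
  ∫ s in Set.Ioi (0:ℝ),
    Real.exp (-s ^ 2 / 2) / s *
      (Real.exp (s * ((VF - (bEI * NE - bII * NI + (bEI - bEE) * νext)) / Real.sqrt aI)) -
       Real.exp (s * ((VR - (bEI * NE - bII * NI + (bEI - bEE) * νext)) / Real.sqrt aI)))

/-- The auxiliary integral `I(N_E)`. -/
noncomputable def Iaux (VR VF aI bEE bEI bII νext : ℝ) (NIfun : ℝ → ℝ) (NE : ℝ) : ℝ :=
  ∫ s in Set.Ioi (0:ℝ),
    Real.exp (-s ^ 2 / 2) *
      Real.exp (-((bEI * NE - bII * NIfun NE + (bEI - bEE) * νext) * s / Real.sqrt aI)) *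
      (Real.exp (s * VF / Real.sqrt aI) - Real.exp (s * VR / Real.sqrt aI))

namespace NIsqAux

lemma intOn_pow_exp (n : ℕ) {u : ℝ} (hu : 0 < u) :
    IntegrableOn (fun s : ℝ => s ^ n * Real.exp (-(u * s))) (Set.Ioi 0) := by
  have h := integrableOn_rpow_mul_exp_neg_mul_rpow (p := 1) (s := (n:ℝ))
    (by have : (0:ℝ) ≤ n := Nat.cast_nonneg n; linarith) zero_lt_one hu
  refine h.congr_fun (fun x hx => ?_) measurableSet_Ioi
  dsimp only; rw [Real.rpow_one, Real.rpow_natCast, neg_mul]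

lemma int_pow_exp (n : ℕ) {u : ℝ} (hu : 0 < u) :
    ∫ s in Set.Ioi (0:ℝ), s ^ n * Real.exp (-(u * s)) = (n ! : ℝ) / u ^ (n + 1) := by
  have h := Real.integral_rpow_mul_exp_neg_mul_Ioi (a := (n:ℝ) + 1) (by positivity) hu
  rw [show ((n:ℝ) + 1 - 1) = (n:ℝ) by ring, Real.Gamma_nat_eq_factorial] at h
  have h2 : ∫ s in Set.Ioi (0:ℝ), s ^ n * Real.exp (-(u * s))
      = ∫ s in Set.Ioi (0:ℝ), s ^ (n:ℝ) * Real.exp (-(u * s)) := by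
    refine setIntegral_congr_fun measurableSet_Ioi fun x hx => ?_
    rw [Real.rpow_natCast]
  rw [h2, h, show ((n:ℝ) + 1) = ((n+1 : ℕ) : ℝ) by push_cast; ring, Real.rpow_natCast]
  rw [div_pow, one_pow]
  ring

lemma int_exp0 {u : ℝ} (hu : 0 < u) :
    ∫ s in Set.Ioi (0:ℝ), Real.exp (-(u * s)) = 1 / u := by
  have := int_pow_exp 0 hu
  simpa using this

lemma int_exp1 {u : ℝ} (hu : 0 < u) :
    ∫ s in Set.Ioi (0:ℝ), s * Real.exp (-(u * s)) = 1 / u ^ 2 := by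
  have := int_pow_exp 1 hu
  norm_num at this
  simpa using this

lemma int_exp2 {u : ℝ} (hu : 0 < u) :
    ∫ s in Set.Ioi (0:ℝ), s ^ 2 * Real.exp (-(u * s)) = 2 / u ^ 3 := by
  have := int_pow_exp 2 hu
  norm_num at this
  simpa using this

lemma int_exp3 {u : ℝ} (hu : 0 < u) :
    ∫ s in Set.Ioi (0:ℝ), s ^ 3 * Real.exp (-(u * s)) = 6 / u ^ 4 := by
  have := int_pow_exp 3 hu
  norm_num at this
  simpa using this

lemma q_nonneg {d s : ℝ} (hd : 0 ≤ d) (hs : 0 ≤ s) : 0 ≤ 1 - Real.exp (-(d * s)) := by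
  have : Real.exp (-(d*s)) ≤ Real.exp 0 := Real.exp_le_exp.mpr (by nlinarith)
  rw [Real.exp_zero] at this; linarith

lemma q_le {d s : ℝ} : 1 - Real.exp (-(d * s)) ≤ d * s := by
  have := Real.add_one_le_exp (-(d*s)); linarith

lemma q_ge {d s : ℝ} (hd : 0 ≤ d) (hs : 0 ≤ s) :
    d * s - (d * s) ^ 2 ≤ 1 - Real.exp (-(d * s)) := by
  set x := d * s with hx
  have hx0 : 0 ≤ x := by positivity
  have h1 : (1 + x) * Real.exp (-x) ≤ 1 := by
    have h2 := Real.add_one_le_exp x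
    have h3 : Real.exp x * Real.exp (-x) = 1 := by
      rw [← Real.exp_add]; simp
    nlinarith [Real.exp_pos (-x)]
  nlinarith [Real.exp_pos (-x)]

lemma exp_gauss_le_one (s : ℝ) : Real.exp (-s ^ 2 / 2) ≤ 1 := by
  rw [← Real.exp_zero]
  exact Real.exp_le_exp.mpr (by nlinarith [sq_nonneg s])

lemma one_sub_le_exp_gauss (s : ℝ) : 1 - s ^ 2 / 2 ≤ Real.exp (-s ^ 2 / 2) := by
  have := Real.add_one_le_exp (-s ^ 2 / 2); linarith

lemma exp_split (u d s : ℝ) :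
    Real.exp (-(u * s)) - Real.exp (-((u + d) * s))
      = Real.exp (-(u * s)) * (1 - Real.exp (-(d * s))) := by
  rw [mul_sub, mul_one, ← Real.exp_add]
  ring_nf



noncomputable def Ag (u d : ℝ) : ℝ :=
  ∫ s in Set.Ioi (0:ℝ),
    Real.exp (-s ^ 2 / 2) * (Real.exp (-(u * s)) - Real.exp (-((u + d) * s)))

noncomputable def Bg (u d : ℝ) : ℝ :=
  ∫ s in Set.Ioi (0:ℝ),
    Real.exp (-s ^ 2 / 2) / s * (Real.exp (-(u * s)) - Real.exp (-((u + d) * s)))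


lemma integrable_gauss_exp (u : ℝ) :
    IntegrableOn (fun s : ℝ => Real.exp (-s ^ 2 / 2 - u * s)) (Set.Ioi 0) := by
  have h : Integrable (fun s : ℝ => Real.exp (-(1/2) * s ^ 2)) :=
    integrable_exp_neg_mul_sq (by norm_num)
  have h2 := (h.comp_add_right u).const_mul (Real.exp (u ^ 2 / 2))
  have h3 : ∀ s : ℝ, Real.exp (u ^ 2 / 2) * Real.exp (-(1/2) * (s + u) ^ 2)
      = Real.exp (-s ^ 2 / 2 - u * s) := by
    intro s; rw [← Real.exp_add]; ring_nf
  exact (h2.congr (ae_of_all _ h3)).integrableOn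

-- nonnegativity of the B integrand (for s > 0, d ≥ 0)
lemma gB_nonneg {u d s : ℝ} (hd : 0 ≤ d) (hs : 0 < s) :
    0 ≤ Real.exp (-s ^ 2 / 2) / s * (Real.exp (-(u * s)) - Real.exp (-((u + d) * s))) := by
  have hq : 0 ≤ 1 - Real.exp (-(d * s)) := by
    have : Real.exp (-(d*s)) ≤ Real.exp 0 := Real.exp_le_exp.mpr (by nlinarith)
    rw [Real.exp_zero] at this; linarith
  rw [exp_split]
  have := Real.exp_pos (-s ^ 2 / 2)
  have := Real.exp_pos (-(u * s))
  positivity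

lemma gA_nonneg {u d s : ℝ} (hd : 0 ≤ d) (hs : 0 ≤ s) :
    0 ≤ Real.exp (-s ^ 2 / 2) * (Real.exp (-(u * s)) - Real.exp (-((u + d) * s))) := by
  have hq : 0 ≤ 1 - Real.exp (-(d * s)) := by
    have : Real.exp (-(d*s)) ≤ Real.exp 0 := Real.exp_le_exp.mpr (by nlinarith)
    rw [Real.exp_zero] at this; linarith
  rw [exp_split]
  have := Real.exp_pos (-s ^ 2 / 2)
  have := Real.exp_pos (-(u * s))
  positivity

lemma gB_le {u d s : ℝ} (hd : 0 ≤ d) (hs : 0 < s) :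
    Real.exp (-s ^ 2 / 2) / s * (Real.exp (-(u * s)) - Real.exp (-((u + d) * s)))
      ≤ d * Real.exp (-s ^ 2 / 2 - u * s) := by
  rw [exp_split]
  have hq : 1 - Real.exp (-(d * s)) ≤ d * s := by
    have := Real.add_one_le_exp (-(d*s)); linarith
  have hE : (0:ℝ) < Real.exp (-s ^ 2 / 2) := Real.exp_pos _
  have hP : (0:ℝ) < Real.exp (-(u * s)) := Real.exp_pos _
  have hEP : Real.exp (-s ^ 2 / 2) * Real.exp (-(u * s)) = Real.exp (-s ^ 2 / 2 - u * s) := by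
    rw [← Real.exp_add]; ring_nf
  rw [div_mul_eq_mul_div, div_le_iff₀ hs, ← hEP]
  nlinarith [mul_le_mul_of_nonneg_left hq (mul_pos hE hP).le]

lemma integrableOn_gB (u : ℝ) {d : ℝ} (hd : 0 ≤ d) :
    IntegrableOn (fun s : ℝ =>
      Real.exp (-s ^ 2 / 2) / s * (Real.exp (-(u * s)) - Real.exp (-((u + d) * s))))
      (Set.Ioi 0) := by
  refine Integrable.mono' ((integrable_gauss_exp u).const_mul d) ?_ ?_
  · apply Measurable.aestronglyMeasurable
    fun_prop
  · filter_upwards [ae_restrict_mem measurableSet_Ioi] with s hs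
    rw [Real.norm_eq_abs, abs_of_nonneg (gB_nonneg hd hs)]
    exact gB_le hd hs

lemma integrableOn_gA (u : ℝ) {d : ℝ} (hd : 0 ≤ d) :
    IntegrableOn (fun s : ℝ =>
      Real.exp (-s ^ 2 / 2) * (Real.exp (-(u * s)) - Real.exp (-((u + d) * s))))
      (Set.Ioi 0) := by
  refine Integrable.mono' (integrable_gauss_exp u) ?_ ?_
  · apply Measurable.aestronglyMeasurable
    fun_prop
  · filter_upwards [ae_restrict_mem measurableSet_Ioi] with s hs
    rw [Real.norm_eq_abs, abs_of_nonneg (gA_nonneg hd (le_of_lt hs))]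
    rw [exp_split]
    have hq1 : 1 - Real.exp (-(d * s)) ≤ 1 := by
      have := Real.exp_pos (-(d * s)); linarith
    have hEP : Real.exp (-s ^ 2 / 2) * Real.exp (-(u * s)) = Real.exp (-s ^ 2 / 2 - u * s) := by
      rw [← Real.exp_add]; ring_nf
    rw [← hEP]
    have hE : (0:ℝ) < Real.exp (-s ^ 2 / 2) := Real.exp_pos _
    have hP : (0:ℝ) < Real.exp (-(u * s)) := Real.exp_pos _
    have h2 : Real.exp (-(u * s)) * (1 - Real.exp (-(d * s))) ≤ Real.exp (-(u * s)) := by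
      nlinarith
    exact mul_le_mul_of_nonneg_left h2 hE.le



lemma intOn_exp0 {u : ℝ} (hu : 0 < u) :
    IntegrableOn (fun s : ℝ => Real.exp (-(u * s))) (Set.Ioi 0) := by
  simpa using intOn_pow_exp 0 hu

lemma intOn_exp1 {u : ℝ} (hu : 0 < u) :
    IntegrableOn (fun s : ℝ => s * Real.exp (-(u * s))) (Set.Ioi 0) := by
  simpa using intOn_pow_exp 1 hu

lemma Bg_le {u d : ℝ} (hu : 0 < u) (hd : 0 < d) : Bg u d ≤ d / u := by
  have hint : IntegrableOn (fun s : ℝ => d * Real.exp (-(u * s))) (Set.Ioi 0) :=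
    (intOn_exp0 hu).const_mul d
  have h := integral_mono_of_nonneg
    (f := fun s : ℝ => Real.exp (-s ^ 2 / 2) / s * (Real.exp (-(u * s)) - Real.exp (-((u + d) * s))))
    (g := fun s : ℝ => d * Real.exp (-(u * s)))
    (μ := volume.restrict (Set.Ioi 0)) ?_ hint ?_
  · have hval2 : (∫ s in Set.Ioi (0:ℝ), d * Real.exp (-(u * s))) = d / u := by
      rw [integral_const_mul, int_exp0 hu]; ring
    rw [Bg]
    exact le_of_le_of_eq h hval2
  · filter_upwards [ae_restrict_mem measurableSet_Ioi] with s hs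
    exact gB_nonneg hd.le hs
  · filter_upwards [ae_restrict_mem measurableSet_Ioi] with s hs
    refine (gB_le hd.le hs).trans ?_
    refine mul_le_mul_of_nonneg_left (Real.exp_le_exp.mpr ?_) hd.le
    nlinarith [sq_nonneg s, (mem_Ioi.mp hs).le, hu.le, mem_Ioi.mp hs]

lemma le_Bg {u d : ℝ} (hu : 0 < u) (hd : 0 < d) :
    d / u - d ^ 2 / u ^ 2 - d / u ^ 3 ≤ Bg u d := by
  have h0 := intOn_exp0 hu
  have h1 := intOn_exp1 hu
  have h2 := intOn_pow_exp 2 hu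
  have i01 : Integrable (fun s : ℝ =>
      d * Real.exp (-(u * s)) - d ^ 2 * (s * Real.exp (-(u * s))))
      (volume.restrict (Set.Ioi 0)) := (h0.const_mul d).sub (h1.const_mul (d ^ 2))
  have i2 : Integrable (fun s : ℝ => d / 2 * (s ^ 2 * Real.exp (-(u * s))))
      (volume.restrict (Set.Ioi 0)) := h2.const_mul (d / 2)
  have hGint : IntegrableOn (fun s : ℝ =>
      d * Real.exp (-(u * s)) - d ^ 2 * (s * Real.exp (-(u * s)))
        - d / 2 * (s ^ 2 * Real.exp (-(u * s)))) (Set.Ioi 0) := i01.sub i2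
  have hmono := integral_mono_ae hGint (integrableOn_gB u hd.le) ?_
  · have hval : (∫ s in Set.Ioi (0:ℝ),
        (d * Real.exp (-(u * s)) - d ^ 2 * (s * Real.exp (-(u * s)))
          - d / 2 * (s ^ 2 * Real.exp (-(u * s)))))
        = d / u - d ^ 2 / u ^ 2 - d / u ^ 3 := by
      rw [integral_sub i01 i2, integral_sub (h0.const_mul d) (h1.const_mul (d ^ 2)),
        integral_const_mul, integral_const_mul, integral_const_mul,
        int_exp0 hu, int_exp1 hu, int_exp2 hu]
      field_simp
    rw [Bg, ← hval]
    exact hmono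
  · filter_upwards [ae_restrict_mem measurableSet_Ioi] with s hs
    have hs' : (0:ℝ) < s := hs
    set E := Real.exp (-s ^ 2 / 2) with hE
    set P := Real.exp (-(u * s)) with hP
    set q := 1 - Real.exp (-(d * s)) with hq
    have hsplit : P - Real.exp (-((u + d) * s)) = P * q := exp_split u d s
    have hq0 : 0 ≤ q := q_nonneg hd.le hs'.le
    have hqle : q ≤ d * s := q_le
    have hqge : d * s - (d * s) ^ 2 ≤ q := q_ge hd.le hs'.le
    have hEge : 1 - s ^ 2 / 2 ≤ E := one_sub_le_exp_gauss s
    have hP0 : 0 < P := Real.exp_pos _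
    have hE0 : 0 < E := Real.exp_pos _
    show d * P - d ^ 2 * (s * P) - d / 2 * (s ^ 2 * P) ≤ E / s * (P - Real.exp (-((u + d) * s)))
    rw [hsplit, show E / s * (P * q) = P * (E * q) / s by ring, le_div_iff₀ hs']
    have key : s * (d - d ^ 2 * s - d / 2 * s ^ 2) ≤ E * q := by
      have hA : (1 - s ^ 2 / 2) * q ≤ E * q := mul_le_mul_of_nonneg_right hEge hq0
      have hB : s ^ 2 / 2 * q ≤ s ^ 2 / 2 * (d * s) :=
        mul_le_mul_of_nonneg_left hqle (by positivity)
      nlinarith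
    have h3 : P * (s * (d - d ^ 2 * s - d / 2 * s ^ 2)) ≤ P * (E * q) :=
      mul_le_mul_of_nonneg_left key hP0.le
    nlinarith [h3]

lemma Ag_le {u d : ℝ} (hu : 0 < u) (hd : 0 < d) : Ag u d ≤ 1 / u - 1 / (u + d) := by
  have hud : 0 < u + d := by linarith
  have hint : IntegrableOn (fun s : ℝ =>
      Real.exp (-(u * s)) - Real.exp (-((u + d) * s))) (Set.Ioi 0) :=
    (intOn_exp0 hu).sub (intOn_exp0 hud)
  have h := integral_mono_of_nonneg
    (f := fun s : ℝ => Real.exp (-s ^ 2 / 2) * (Real.exp (-(u * s)) - Real.exp (-((u + d) * s))))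
    (g := fun s : ℝ => Real.exp (-(u * s)) - Real.exp (-((u + d) * s)))
    (μ := volume.restrict (Set.Ioi 0)) ?_ hint ?_
  · have hval : (∫ s in Set.Ioi (0:ℝ), (Real.exp (-(u * s)) - Real.exp (-((u + d) * s))))
        = 1 / u - 1 / (u + d) := by
      rw [integral_sub (intOn_exp0 hu) (intOn_exp0 hud), int_exp0 hu, int_exp0 hud]
    rw [Ag]
    exact le_of_le_of_eq h hval
  · filter_upwards [ae_restrict_mem measurableSet_Ioi] with s hs
    exact gA_nonneg hd.le (mem_Ioi.mp hs).le
  · filter_upwards [ae_restrict_mem measurableSet_Ioi] with s hs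
    have hfac : 0 ≤ Real.exp (-(u * s)) - Real.exp (-((u + d) * s)) := by
      rw [exp_split]
      have hq0 : 0 ≤ 1 - Real.exp (-(d * s)) := q_nonneg hd.le (mem_Ioi.mp hs).le
      positivity
    calc Real.exp (-s ^ 2 / 2) * (Real.exp (-(u * s)) - Real.exp (-((u + d) * s)))
        ≤ 1 * (Real.exp (-(u * s)) - Real.exp (-((u + d) * s))) :=
          mul_le_mul_of_nonneg_right (exp_gauss_le_one s) hfac
      _ = Real.exp (-(u * s)) - Real.exp (-((u + d) * s)) := one_mul _

lemma le_Ag {u d : ℝ} (hu : 0 < u) (hd : 0 < d) :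
    1 / u - 1 / (u + d) - 3 * d / u ^ 4 ≤ Ag u d := by
  have hud : 0 < u + d := by linarith
  have i01 : Integrable (fun s : ℝ =>
      Real.exp (-(u * s)) - Real.exp (-((u + d) * s))) (volume.restrict (Set.Ioi 0)) :=
    (intOn_exp0 hu).sub (intOn_exp0 hud)
  have h3 := intOn_pow_exp 3 hu
  have i2 : Integrable (fun s : ℝ => d / 2 * (s ^ 3 * Real.exp (-(u * s))))
      (volume.restrict (Set.Ioi 0)) := h3.const_mul (d / 2)
  have hGint : IntegrableOn (fun s : ℝ =>
      (Real.exp (-(u * s)) - Real.exp (-((u + d) * s))) - d / 2 * (s ^ 3 * Real.exp (-(u * s))))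
      (Set.Ioi 0) := i01.sub i2
  have hmono := integral_mono_ae hGint (integrableOn_gA u hd.le) ?_
  · have hval : (∫ s in Set.Ioi (0:ℝ),
        ((Real.exp (-(u * s)) - Real.exp (-((u + d) * s))) - d / 2 * (s ^ 3 * Real.exp (-(u * s)))))
        = 1 / u - 1 / (u + d) - 3 * d / u ^ 4 := by
      rw [integral_sub i01 i2, integral_sub (intOn_exp0 hu) (intOn_exp0 hud),
        integral_const_mul, int_exp0 hu, int_exp0 hud, int_exp3 hu]
      ring
    rw [Ag, ← hval]
    exact hmono
  · filter_upwards [ae_restrict_mem measurableSet_Ioi] with s hs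
    have hs' : (0:ℝ) < s := hs
    set E := Real.exp (-s ^ 2 / 2) with hE
    set P := Real.exp (-(u * s)) with hP
    set q := 1 - Real.exp (-(d * s)) with hq
    have hsplit : P - Real.exp (-((u + d) * s)) = P * q := exp_split u d s
    have hq0 : 0 ≤ q := q_nonneg hd.le hs'.le
    have hqle : q ≤ d * s := q_le
    have hEge : 1 - s ^ 2 / 2 ≤ E := one_sub_le_exp_gauss s
    have hP0 : 0 < P := Real.exp_pos _
    show P - Real.exp (-((u + d) * s)) - d / 2 * (s ^ 3 * P) ≤ E * (P - Real.exp (-((u + d) * s)))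
    rw [hsplit]
    have hPq : 0 ≤ P * q := by positivity
    have hA : (1 - s ^ 2 / 2) * (P * q) ≤ E * (P * q) := mul_le_mul_of_nonneg_right hEge hPq
    have hBq : P * q ≤ P * (d * s) := mul_le_mul_of_nonneg_left hqle hP0.le
    have hB : s ^ 2 / 2 * (P * q) ≤ s ^ 2 / 2 * (P * (d * s)) :=
      mul_le_mul_of_nonneg_left hBq (by positivity)
    nlinarith [hA, hB]

lemma tendsto_Ag {d : ℝ} (hd : 0 < d) :
    Tendsto (fun u : ℝ => u ^ 2 * Ag u d) atTop (nhds d) := by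
  have hinv : Tendsto (fun u : ℝ => u⁻¹) atTop (nhds 0) := tendsto_inv_atTop_zero
  have hinvd : Tendsto (fun u : ℝ => (u + d)⁻¹) atTop (nhds 0) :=
    hinv.comp (tendsto_atTop_add_const_right atTop d tendsto_id)
  have hU : Tendsto (fun u : ℝ => d - d ^ 2 * (u + d)⁻¹) atTop (nhds d) := by
    have := (tendsto_const_nhds (x := d) (f := atTop)).sub (hinvd.const_mul (d ^ 2))
    simpa using this
  have hL : Tendsto (fun u : ℝ => d - d ^ 2 * (u + d)⁻¹ - 3 * d * (u⁻¹) ^ 2) atTop (nhds d) := by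
    have := hU.sub ((hinv.pow 2).const_mul (3 * d))
    simpa using this
  refine tendsto_of_tendsto_of_tendsto_of_le_of_le' hL hU ?_ ?_
  · filter_upwards [eventually_gt_atTop (0:ℝ)] with u hu
    have hud : 0 < u + d := by linarith
    have h2 := mul_le_mul_of_nonneg_left (le_Ag hu hd) (by positivity : (0:ℝ) ≤ u ^ 2)
    calc d - d ^ 2 * (u + d)⁻¹ - 3 * d * (u⁻¹) ^ 2
        = u ^ 2 * (1 / u - 1 / (u + d) - 3 * d / u ^ 4) := by
          field_simp
          ring
      _ ≤ u ^ 2 * Ag u d := h2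
  · filter_upwards [eventually_gt_atTop (0:ℝ)] with u hu
    have hud : 0 < u + d := by linarith
    have h2 := mul_le_mul_of_nonneg_left (Ag_le hu hd) (by positivity : (0:ℝ) ≤ u ^ 2)
    calc u ^ 2 * Ag u d ≤ u ^ 2 * (1 / u - 1 / (u + d)) := h2
      _ = d - d ^ 2 * (u + d)⁻¹ := by field_simp; ring

lemma tendsto_Bg {d : ℝ} (hd : 0 < d) :
    Tendsto (fun u : ℝ => u * Bg u d) atTop (nhds d) := by
  have hinv : Tendsto (fun u : ℝ => u⁻¹) atTop (nhds 0) := tendsto_inv_atTop_zero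
  have hL : Tendsto (fun u : ℝ => d - d ^ 2 * u⁻¹ - d * (u⁻¹) ^ 2) atTop (nhds d) := by
    have := ((tendsto_const_nhds (x := d) (f := atTop)).sub
      (hinv.const_mul (d ^ 2))).sub ((hinv.pow 2).const_mul d)
    simpa using this
  refine tendsto_of_tendsto_of_tendsto_of_le_of_le' hL tendsto_const_nhds ?_ ?_
  · filter_upwards [eventually_gt_atTop (0:ℝ)] with u hu
    have h2 := mul_le_mul_of_nonneg_left (le_Bg hu hd) hu.le
    calc d - d ^ 2 * u⁻¹ - d * (u⁻¹) ^ 2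
        = u * (d / u - d ^ 2 / u ^ 2 - d / u ^ 3) := by field_simp
      _ ≤ u * Bg u d := h2
  · filter_upwards [eventually_gt_atTop (0:ℝ)] with u hu
    have h2 := mul_le_mul_of_nonneg_left (Bg_le hu hd) hu.le
    calc u * Bg u d ≤ u * (d / u) := h2
      _ = d := by field_simp

lemma Bg_anti {d : ℝ} (hd : 0 < d) {u1 u2 : ℝ} (h : u1 ≤ u2) : Bg u2 d ≤ Bg u1 d := by
  refine integral_mono_ae (integrableOn_gB u2 hd.le) (integrableOn_gB u1 hd.le) ?_
  filter_upwards [ae_restrict_mem measurableSet_Ioi] with s hs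
  have hs' : (0:ℝ) < s := hs
  have hq0 : 0 ≤ 1 - Real.exp (-(d * s)) := q_nonneg hd.le hs'.le
  have hP : Real.exp (-(u2 * s)) ≤ Real.exp (-(u1 * s)) :=
    Real.exp_le_exp.mpr (by nlinarith)
  simp only [exp_split]
  have hEs : 0 ≤ Real.exp (-s ^ 2 / 2) / s := by positivity
  exact mul_le_mul_of_nonneg_left (mul_le_mul_of_nonneg_right hP hq0) hEs

lemma Bg_pos (u : ℝ) {d : ℝ} (hd : 0 < d) : 0 < Bg u d := by
  rw [Bg]
  refine (setIntegral_pos_iff_support_of_nonneg_ae ?_ (integrableOn_gB u hd.le)).mpr ?_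
  · filter_upwards [ae_restrict_mem measurableSet_Ioi] with s hs
    exact gB_nonneg hd.le hs
  · have hsub : Set.Ioi (0:ℝ) ⊆ Function.support (fun s : ℝ =>
        Real.exp (-s ^ 2 / 2) / s * (Real.exp (-(u * s)) - Real.exp (-((u + d) * s)))) := by
      intro s hs
      have hs' : (0:ℝ) < s := hs
      have h1 : Real.exp (-((u + d) * s)) < Real.exp (-(u * s)) :=
        Real.exp_lt_exp.mpr (by nlinarith)
      have h2 : 0 < Real.exp (-s ^ 2 / 2) / s := by positivity
      exact ne_of_gt (mul_pos h2 (by linarith))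
    have : Set.Ioi (0:ℝ) ⊆ Function.support _ ∩ Set.Ioi 0 := subset_inter hsub Subset.rfl
    calc (0:ENNReal) < volume (Set.Ioi (0:ℝ)) := by rw [Real.volume_Ioi]; simp
      _ ≤ _ := measure_mono this

lemma I2_eq (VR VF aI bEE bEI bII νext NE NI : ℝ) :
    I2 VR VF aI bEE bEI bII νext NE NI
      = Bg ((bEI * NE - bII * NI + (bEI - bEE) * νext - VF) / Real.sqrt aI)
          ((VF - VR) / Real.sqrt aI) := by
  rw [I2, Bg]
  refine setIntegral_congr_fun measurableSet_Ioi fun s hs => ?_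
  have e1 : s * ((VF - (bEI * NE - bII * NI + (bEI - bEE) * νext)) / Real.sqrt aI)
      = -((bEI * NE - bII * NI + (bEI - bEE) * νext - VF) / Real.sqrt aI * s) := by ring
  have e2 : s * ((VR - (bEI * NE - bII * NI + (bEI - bEE) * νext)) / Real.sqrt aI)
      = -(((bEI * NE - bII * NI + (bEI - bEE) * νext - VF) / Real.sqrt aI
          + (VF - VR) / Real.sqrt aI) * s) := by ring
  rw [e1, e2]

lemma Iaux_eq (VR VF aI bEE bEI bII νext : ℝ) (NIfun : ℝ → ℝ) (NE : ℝ) :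
    Iaux VR VF aI bEE bEI bII νext NIfun NE
      = Ag ((bEI * NE - bII * NIfun NE + (bEI - bEE) * νext - VF) / Real.sqrt aI)
          ((VF - VR) / Real.sqrt aI) := by
  rw [Iaux, Ag]
  refine setIntegral_congr_fun measurableSet_Ioi fun s hs => ?_
  have h1 : Real.exp (-((bEI * NE - bII * NIfun NE + (bEI - bEE) * νext) * s / Real.sqrt aI))
        * Real.exp (s * VF / Real.sqrt aI)
      = Real.exp (-((bEI * NE - bII * NIfun NE + (bEI - bEE) * νext - VF) / Real.sqrt aI * s)) := by
    rw [← Real.exp_add]; congr 1; ring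
  have h2 : Real.exp (-((bEI * NE - bII * NIfun NE + (bEI - bEE) * νext) * s / Real.sqrt aI))
        * Real.exp (s * VR / Real.sqrt aI)
      = Real.exp (-(((bEI * NE - bII * NIfun NE + (bEI - bEE) * νext - VF) / Real.sqrt aI
          + (VF - VR) / Real.sqrt aI) * s)) := by
    rw [← Real.exp_add]; congr 1; ring
  calc Real.exp (-s ^ 2 / 2)
        * Real.exp (-((bEI * NE - bII * NIfun NE + (bEI - bEE) * νext) * s / Real.sqrt aI))
        * (Real.exp (s * VF / Real.sqrt aI) - Real.exp (s * VR / Real.sqrt aI))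
      = Real.exp (-s ^ 2 / 2)
          * (Real.exp (-((bEI * NE - bII * NIfun NE + (bEI - bEE) * νext) * s / Real.sqrt aI))
            * Real.exp (s * VF / Real.sqrt aI))
        - Real.exp (-s ^ 2 / 2)
          * (Real.exp (-((bEI * NE - bII * NIfun NE + (bEI - bEE) * νext) * s / Real.sqrt aI))
            * Real.exp (s * VR / Real.sqrt aI)) := by ring
    _ = _ := by rw [h1, h2]; ring

end NIsqAux

open NIsqAux

/-- If `b_EI, b_II > 0`, then `N_I(N_E)² · I(N_E) → √a_I/(V_F − V_R)` as `N_E → ∞`. -/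
theorem NIsq_Iaux_tendsto (VR VF aI bEE bEI bII νext : ℝ)
    (hV : VR < VF) (haI : 0 < aI)
    (hEE : 0 ≤ bEE) (hEI : 0 < bEI) (hII : 0 < bII) (hν : 0 ≤ νext)
    (NIfun : ℝ → ℝ)
    (hNI : ∀ NE : ℝ, 0 ≤ NE →
      0 < NIfun NE ∧ NIfun NE * I2 VR VF aI bEE bEI bII νext NE (NIfun NE) = 1) :
    Filter.Tendsto
      (fun NE => (NIfun NE) ^ 2 * Iaux VR VF aI bEE bEI bII νext NIfun NE)
      Filter.atTop (nhds (Real.sqrt aI / (VF - VR))) := by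
  have hσ : 0 < Real.sqrt aI := Real.sqrt_pos.mpr haI
  set σ := Real.sqrt aI with hσdef
  set d := (VF - VR) / σ with hd_def
  have hd : 0 < d := div_pos (by linarith) hσ
  set v : ℝ → ℝ := fun NE => bEI * NE - bII * NIfun NE + (bEI - bEE) * νext with hv
  set w : ℝ → ℝ := fun NE => (v NE - VF) / σ with hw
  have hI2 : ∀ NE : ℝ, I2 VR VF aI bEE bEI bII νext NE (NIfun NE) = Bg (w NE) d :=
    fun NE => I2_eq VR VF aI bEE bEI bII νext NE (NIfun NE)
  have hIaux : ∀ NE : ℝ, Iaux VR VF aI bEE bEI bII νext NIfun NE = Ag (w NE) d :=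
    fun NE => Iaux_eq VR VF aI bEE bEI bII νext NIfun NE
  -- Step 1: `w NE → ∞`
  have hwtop : Filter.Tendsto w Filter.atTop Filter.atTop := by
    rw [Filter.tendsto_atTop]
    intro M
    have hδpos : 0 < Bg M d := Bg_pos M hd
    set δ := Bg M d with hδ
    filter_upwards [Filter.eventually_ge_atTop
      (max 0 ((M * σ + VF + bII / δ - (bEI - bEE) * νext) / bEI))] with NE hNE
    have hNE0 : (0:ℝ) ≤ NE := le_trans (le_max_left _ _) hNE
    obtain ⟨hNIpos, hNIeq⟩ := hNI NE hNE0
    by_contra hcon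
    push_neg at hcon
    have hBle : δ ≤ Bg (w NE) d := Bg_anti hd hcon.le
    have hB1 : NIfun NE * Bg (w NE) d = 1 := by rw [← hI2 NE]; exact hNIeq
    have hBpos : 0 < Bg (w NE) d := Bg_pos (w NE) hd
    have hNIval : NIfun NE = (Bg (w NE) d)⁻¹ := eq_inv_of_mul_eq_one_left hB1
    have hNIle : NIfun NE ≤ 1 / δ := by
      rw [hNIval, inv_eq_one_div]
      exact one_div_le_one_div_of_le hδpos hBle
    have h1 : M * σ + VF + bII / δ - (bEI - bEE) * νext ≤ bEI * NE := by
      calc M * σ + VF + bII / δ - (bEI - bEE) * νext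
          = bEI * ((M * σ + VF + bII / δ - (bEI - bEE) * νext) / bEI) := by field_simp
        _ ≤ bEI * NE := mul_le_mul_of_nonneg_left (le_trans (le_max_right _ _) hNE) hEI.le
    have h2 : bII * NIfun NE ≤ bII / δ := by
      calc bII * NIfun NE ≤ bII * (1 / δ) := mul_le_mul_of_nonneg_left hNIle hII.le
        _ = bII / δ := by ring
    have hvge : M * σ + VF ≤ v NE := by
      simp only [hv]; linarith
    have : M ≤ w NE := by
      simp only [hw]; rw [le_div_iff₀ hσ]; linarith
    linarith
  -- Step 2: combine the limits
  have hA := (tendsto_Ag hd).comp hwtop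
  have hB := (tendsto_Bg hd).comp hwtop
  have hd0 : d ≠ 0 := ne_of_gt hd
  have hcomb : Filter.Tendsto
      (fun NE => ((w NE) ^ 2 * Ag (w NE) d) * (((w NE) * Bg (w NE) d)⁻¹) ^ 2)
      Filter.atTop (nhds (d * (d⁻¹) ^ 2)) := hA.mul ((hB.inv₀ hd0).pow 2)
  have heq : ∀ᶠ NE in Filter.atTop,
      ((w NE) ^ 2 * Ag (w NE) d) * (((w NE) * Bg (w NE) d)⁻¹) ^ 2
        = NIfun NE ^ 2 * Iaux VR VF aI bEE bEI bII νext NIfun NE := by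
    filter_upwards [Filter.eventually_ge_atTop (0:ℝ), hwtop.eventually_gt_atTop 0]
      with NE h0 hwpos
    obtain ⟨hNIpos, hNIeq⟩ := hNI NE h0
    have hB1 : NIfun NE * Bg (w NE) d = 1 := by rw [← hI2 NE]; exact hNIeq
    have hBpos : 0 < Bg (w NE) d := Bg_pos (w NE) hd
    have hNIval : NIfun NE = (Bg (w NE) d)⁻¹ := eq_inv_of_mul_eq_one_left hB1
    rw [hIaux NE, hNIval]
    have hw0 : w NE ≠ 0 := ne_of_gt hwpos
    have hB0 : Bg (w NE) d ≠ 0 := ne_of_gt hBpos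
    field_simp
  have hfinal := hcomb.congr' heq
  have hval : Real.sqrt aI / (VF - VR) = d * (d⁻¹) ^ 2 := by
    rw [hd_def]
    have hVFR : VF - VR ≠ 0 := by linarith
    have hσ0 : σ ≠ 0 := ne_of_gt hσ
    field_simp
    rw [← hσdef]
  rw [hval]
  exact hfinal
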